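/- Let n ≥ 3 be an integer and A an infinite integral domain of finite Krull dimension whose Jacobson radical is trivial. Let 𝔮 ◁ A be a maximal ideal and let α ∈ SL_n(A) with α ∉ SL*_n(A;𝔮). Then gcl_{SL_n(A)}(α)^{32} ∩ U(A) is not contained in U(A;𝔮); that is, there exists a matrix u ∈ U(A) which is a product of 32 elements of gcl_{SL_n(A)}(α) and which is not congruent to the identity modulo 𝔮. -/

import Mathlib

/-!
Reduce modulo `𝔮`. As `α` is not scalar mod `𝔮` and `n ≥ 3`, some vector with first coordinate
`1` is not an eigenvector of `α` mod `𝔮`; conjugating `α` by a transvection that moves `e₀` to a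
lift of this vector gives `β ∈ gcl α` with `β a 0 ∉ 𝔮` for some `a ≠ 0`, and then
`(β⁻¹) q 0 ∉ 𝔮` for some `q ≠ 0`. For transvections `1 + x yᵀ` (with `yᵀx = 0`) one has
`⁅1 + u wᵀ, 1 + x yᵀ⁆ = 1 + (wᵀx) u yᵀ` whenever `yᵀu = 0`, so three nested commutators with
transvections `1 + e₀ (·)ᵀ` turn `β` into an element `1 + e₀ zᵀ`, `z₀ = 0`, of `gcl α ^ 8 ∩ U(A)`
with entry `z_b = -(β a 0)² (β⁻¹) q 0 ∉ 𝔮`.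
-/

open scoped Pointwise

/-- The elementary matrix `e_{i,j}(a) ∈ SL_n(A)`. -/
def elemSL {n : ℕ} {A : Type*} [CommRing A] (i j : Fin n) (hij : i ≠ j) (a : A) :
    Matrix.SpecialLinearGroup (Fin n) A :=
  ⟨Matrix.transvection i j a, Matrix.det_transvection_of_ne i j hij a⟩

/-- `gcl_Γ(α) = {βαβ⁻¹, βα⁻¹β⁻¹, 1 : β ∈ Γ}`. -/
def gcl {Γ : Type*} [Group Γ] (α : Γ) : Set Γ :=
  {g | g = 1 ∨ ∃ β : Γ, g = β * α * β⁻¹ ∨ g = β * α⁻¹ * β⁻¹}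

/-- `U(A) = E_{1,2}(A) E_{1,3}(A) ⋯ E_{1,n}(A)`, the set of upper unitriangular matrices
supported on the first row. -/
def Uset (n : ℕ) (hn : 0 < n) (A : Type*) [CommRing A] :
    Set (Matrix.SpecialLinearGroup (Fin n) A) :=
  {g | ∃ b : Fin n → A, ∀ i j, (g : Matrix (Fin n) (Fin n) A) i j =
    if i = j then 1 else if i = (⟨0, hn⟩ : Fin n) then b j else 0}

open Matrix
open scoped commutatorElement

section GeneralizedConjugacyClass

variable {Γ : Type*} [Group Γ] (α : Γ)

lemma one_mem_gcl : (1 : Γ) ∈ gcl α := Or.inl rfl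

lemma conj_mem_gcl (β : Γ) : β * α * β⁻¹ ∈ gcl α := Or.inr ⟨β, Or.inl rfl⟩

variable {α}

lemma conj_mem_gcl_of_mem {x : Γ} (hx : x ∈ gcl α) (β : Γ) : β * x * β⁻¹ ∈ gcl α := by
  rcases hx with rfl | ⟨γ, rfl | rfl⟩
  · simpa using one_mem_gcl α
  · exact Or.inr ⟨β * γ, Or.inl (by group)⟩
  · exact Or.inr ⟨β * γ, Or.inr (by group)⟩

lemma inv_mem_gcl {x : Γ} (hx : x ∈ gcl α) : x⁻¹ ∈ gcl α := by
  rcases hx with rfl | ⟨γ, rfl | rfl⟩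
  · simpa using one_mem_gcl α
  · exact Or.inr ⟨γ, Or.inr (by group)⟩
  · exact Or.inr ⟨γ, Or.inl (by group)⟩

lemma inv_mem_gcl_pow {x : Γ} {k : ℕ} (hx : x ∈ gcl α ^ k) : x⁻¹ ∈ gcl α ^ k := by
  have hinv : (gcl α)⁻¹ = gcl α :=
    Set.ext fun y => ⟨fun hy => inv_inv y ▸ inv_mem_gcl hy, inv_mem_gcl⟩
  rw [← hinv, inv_pow]
  exact Set.inv_mem_inv.mpr hx

lemma conj_mem_gcl_pow {x : Γ} {k : ℕ} (hx : x ∈ gcl α ^ k) (β : Γ) :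
    β * x * β⁻¹ ∈ gcl α ^ k := by
  have hconj : MulAut.conj β '' gcl α ⊆ gcl α := by
    rintro _ ⟨y, hy, rfl⟩
    exact conj_mem_gcl_of_mem hy β
  refine Set.pow_subset_pow_left hconj ?_
  rw [← Set.image_pow]
  exact ⟨x, hx, rfl⟩

lemma commutatorElement_mem_gcl_pow {x : Γ} {k : ℕ} (hx : x ∈ gcl α ^ k) (β : Γ) :
    ⁅x, β⁆ ∈ gcl α ^ (2 * k) := by
  rw [show ⁅x, β⁆ = x * (β * x⁻¹ * β⁻¹) by group, two_mul, pow_add]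
  exact Set.mul_mem_mul hx (conj_mem_gcl_pow (inv_mem_gcl_pow hx) β)

end GeneralizedConjugacyClass

lemma commutatorElement_mul_left_of_commute {G : Type*} [Group G] {k f : G} (h : G)
    (hkf : Commute k f) : ⁅h * k, f⁆ = ⁅h, f⁆ := by
  calc ⁅h * k, f⁆ = h * (k * f * k⁻¹) * h⁻¹ * f⁻¹ := by group
    _ = ⁅h, f⁆ := by rw [hkf.mul_inv_cancel, commutatorElement_def]

lemma exists_ne_ne_of_two_lt_card {ι : Type*} [Fintype ι] [DecidableEq ι]
    (h : 2 < Fintype.card ι) (i j : ι) : ∃ k, k ≠ i ∧ k ≠ j := by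
  obtain ⟨k, -, hk⟩ := Finset.exists_mem_notMem_of_card_lt_card
    ((Finset.card_le_two (a := i) (b := j)).trans_lt h)
  exact ⟨k, by simp_all⟩

namespace Matrix.SpecialLinearGroup

variable {ι R : Type*} [Fintype ι] [DecidableEq ι] [CommRing R]

def oneAddVecMulVec (x y : ι → R) (h : y ⬝ᵥ x = 0) : SpecialLinearGroup ι R :=
  ⟨1 + vecMulVec x y, by
    rw [vecMulVec_eq Unit, det_one_add_replicateCol_mul_replicateRow, h, add_zero]⟩

@[simp]
lemma coe_oneAddVecMulVec (x y : ι → R) (h : y ⬝ᵥ x = 0) :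
    (oneAddVecMulVec x y h : Matrix ι ι R) = 1 + vecMulVec x y := rfl

lemma oneAddVecMulVec_mul_oneAddVecMulVec_left (x a b : ι → R) (ha : a ⬝ᵥ x = 0)
    (hb : b ⬝ᵥ x = 0) :
    oneAddVecMulVec x a ha * oneAddVecMulVec x b hb =
      oneAddVecMulVec x (a + b) (by rw [add_dotProduct, ha, hb, add_zero]) := by
  apply Subtype.ext
  simp only [coe_mul, coe_oneAddVecMulVec, mul_add, add_mul, one_mul, mul_one,
    vecMulVec_mul_vecMulVec, ha, zero_smul, vecMulVec_zero, vecMulVec_add]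
  abel

lemma oneAddVecMulVec_mul_oneAddVecMulVec_right (a b y : ι → R) (ha : y ⬝ᵥ a = 0)
    (hb : y ⬝ᵥ b = 0) :
    oneAddVecMulVec a y ha * oneAddVecMulVec b y hb =
      oneAddVecMulVec (a + b) y (by rw [dotProduct_add, ha, hb, add_zero]) := by
  apply Subtype.ext
  simp only [coe_mul, coe_oneAddVecMulVec, mul_add, add_mul, one_mul, mul_one,
    vecMulVec_mul_vecMulVec, hb, zero_smul, vecMulVec_zero, add_vecMulVec]
  abel

lemma commute_oneAddVecMulVec_left (x a b : ι → R) (ha : a ⬝ᵥ x = 0) (hb : b ⬝ᵥ x = 0) :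
    Commute (oneAddVecMulVec x a ha) (oneAddVecMulVec x b hb) := by
  simp only [Commute, SemiconjBy, oneAddVecMulVec_mul_oneAddVecMulVec_left, add_comm a b]

lemma inv_oneAddVecMulVec (x y : ι → R) (h : y ⬝ᵥ x = 0) :
    (oneAddVecMulVec x y h)⁻¹ = oneAddVecMulVec (-x) y (by rw [dotProduct_neg, h, neg_zero]) := by
  refine inv_eq_of_mul_eq_one_right ?_
  apply Subtype.ext
  simp [oneAddVecMulVec_mul_oneAddVecMulVec_right]

lemma conj_oneAddVecMulVec (β : SpecialLinearGroup ι R) (x y : ι → R) (h : y ⬝ᵥ x = 0) :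
    β * oneAddVecMulVec x y h * β⁻¹ =
      oneAddVecMulVec (β *ᵥ x) (y ᵥ* (β⁻¹ : SpecialLinearGroup ι R))
        (by rw [← dotProduct_mulVec, mulVec_mulVec, ← coe_mul, inv_mul_cancel, coe_one,
          one_mulVec, h]) := by
  apply Subtype.ext
  have hβ : (β : Matrix ι ι R) * (β⁻¹ : SpecialLinearGroup ι R) = 1 := by
    rw [← coe_mul, mul_inv_cancel, coe_one]
  simp only [coe_mul, coe_oneAddVecMulVec, mul_add, add_mul, mul_one, hβ, mul_vecMulVec,
    vecMulVec_mul]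

lemma commutatorElement_oneAddVecMulVec (u w x y : ι → R) (hw : w ⬝ᵥ u = 0)
    (hy : y ⬝ᵥ x = 0) (hyu : y ⬝ᵥ u = 0) :
    ⁅oneAddVecMulVec u w hw, oneAddVecMulVec x y hy⁆ =
      oneAddVecMulVec ((w ⬝ᵥ x) • u) y (by rw [dotProduct_smul, hyu, smul_zero]) := by
  rw [commutatorElement_def, conj_oneAddVecMulVec]
  simp only [inv_oneAddVecMulVec, coe_oneAddVecMulVec, add_mulVec, one_mulVec, vecMulVec_mulVec,
    vecMul_add, vecMul_one, vecMul_vecMulVec, dotProduct_neg, hyu, neg_zero, zero_smul, add_zero,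
    oneAddVecMulVec_mul_oneAddVecMulVec_right, op_smul_eq_smul, add_neg_cancel_comm]

end Matrix.SpecialLinearGroup

lemma mem_Uset_of_coe_eq_one_add_vecMulVec_single {n : ℕ} (hn : 0 < n) {R : Type*} [CommRing R]
    {g : SpecialLinearGroup (Fin n) R} {y : Fin n → R} (hy : y ⟨0, hn⟩ = 0)
    (hg : (g : Matrix (Fin n) (Fin n) R) = 1 + vecMulVec (Pi.single ⟨0, hn⟩ 1) y) :
    g ∈ Uset n hn R :=
  ⟨y, fun i j => by
    simp only [hg, Matrix.add_apply, one_apply, vecMulVec_apply, Pi.single_apply]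
    split_ifs <;> simp_all⟩

section Eigenvectors

variable {ι K : Type*} [Fintype ι] [DecidableEq ι] [CommRing K]

theorem exists_eq_scalar_of_forall_mulVec_eq_smul (hι : 2 < Fintype.card ι) (i₀ : ι)
    (M : Matrix ι ι K) (hM : ∀ v : ι → K, v i₀ = 1 → ∃ c : K, M *ᵥ v = c • v) :
    ∃ c : K, M = scalar ι c := by
  set e : ι → ι → K := fun i => Pi.single i 1 with he
  obtain ⟨c₀, hc₀⟩ := hM (e i₀) (by simp only [he, Pi.single_eq_same])
  have hpair : ∀ i ≠ i₀, ∃ c : K, M *ᵥ e i = c • (e i₀ + e i) - c₀ • e i₀ := by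
    intro i hi
    obtain ⟨c, hc⟩ := hM (e i₀ + e i) (by simp [he, hi])
    exact ⟨c, by rw [← hc, mulVec_add, hc₀, add_sub_cancel_left]⟩
  have hcol : ∀ i, M *ᵥ e i = c₀ • e i := by
    intro i
    by_cases hi : i = i₀
    · rwa [hi]
    obtain ⟨j, hji, hj⟩ := exists_ne_ne_of_two_lt_card hι i₀ i
    obtain ⟨cᵢ, hcᵢ⟩ := hpair i hi
    obtain ⟨cⱼ, hcⱼ⟩ := hpair j hji
    obtain ⟨d, hd⟩ := hM (e i₀ + e i + e j) (by simp [he, hi, hji])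
    rw [mulVec_add, mulVec_add, hc₀, hcᵢ, hcⱼ] at hd
    have hdⱼ := congrFun hd j
    have hd₀ := congrFun hd i₀
    simp only [he, Pi.add_apply, Pi.sub_apply, Pi.smul_apply, Pi.single_eq_same,
      Pi.single_eq_of_ne, hj, hji, Ne.symm hi, Ne.symm hji, ne_eq,
      not_false_eq_true, smul_eq_mul, mul_zero, mul_one, zero_add, add_zero, sub_zero] at hdⱼ hd₀
    have : cᵢ = c₀ := by linear_combination hd₀ - hdⱼ
    rw [hcᵢ, this, smul_add, add_sub_cancel_left]
  refine ⟨c₀, ext_of_mulVec_single fun i => ?_⟩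
  rw [hcol i, scalar_apply, diagonal_const_mulVec]

end Eigenvectors

namespace Matrix.SpecialLinearGroup

variable {ι R K : Type*} [Fintype ι] [DecidableEq ι] [CommRing R] [CommRing K]

lemma mem_center_of_coe_eq_scalar {A : SpecialLinearGroup ι K} {r : K}
    (hA : (A : Matrix ι ι K) = scalar ι r) : A ∈ Subgroup.center (SpecialLinearGroup ι K) :=
  Subgroup.mem_center_iff.mpr fun B => Subtype.ext <| by
    simp only [coe_mul, hA, (scalar_commute r (Commute.all r) (B : Matrix ι ι K)).eq]

lemma exists_map_mulVec_single_eq {φ : R →+* K} (hφ : Function.Surjective φ) {i₀ : ι}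
    {v : ι → K} (hv : v i₀ = 1) :
    ∃ D : SpecialLinearGroup ι R, (map φ D : Matrix ι ι K) *ᵥ Pi.single i₀ 1 = v := by
  set z : ι → R := fun i => if i = i₀ then 0 else Function.surjInv hφ (v i)
  refine ⟨oneAddVecMulVec z (Pi.single i₀ 1) (by simp [z]), funext fun i => ?_⟩
  by_cases hi : i = i₀
  · subst hi; simp [z, hv, vecMulVec_apply]
  · simp [z, hi, vecMulVec_apply, Function.surjInv_eq hφ]

end Matrix.SpecialLinearGroup

open Matrix.SpecialLinearGroup

section Reduction

variable {ι R K : Type*} [Fintype ι] [DecidableEq ι] [CommRing R] [CommRing K]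

theorem exists_mem_gcl_map_apply_ne_zero (hι : 2 < Fintype.card ι) (i₀ : ι) {φ : R →+* K}
    (hφ : Function.Surjective φ) {α : SpecialLinearGroup ι R}
    (hα : map φ α ∉ Subgroup.center (SpecialLinearGroup ι K)) :
    ∃ β ∈ gcl α, ∃ a ≠ i₀, φ ((β : Matrix ι ι R) a i₀) ≠ 0 := by
  by_contra! H
  suffices ∀ v : ι → K, v i₀ = 1 → ∃ c : K, (map φ α : Matrix ι ι K) *ᵥ v = c • v by
    obtain ⟨c, hc⟩ := exists_eq_scalar_of_forall_mulVec_eq_smul hι i₀ _ this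
    exact hα (mem_center_of_coe_eq_scalar hc)
  intro v hv
  obtain ⟨D, hD⟩ := exists_map_mulVec_single_eq hφ hv
  set β := D⁻¹ * α * D⁻¹⁻¹
  have hβ : (map φ β : Matrix ι ι K) *ᵥ Pi.single i₀ 1 =
      φ ((β : Matrix ι ι R) i₀ i₀) • Pi.single i₀ 1 := by
    ext a
    by_cases ha : a = i₀
    · subst ha; simp
    · simp [ha, H β (conj_mem_gcl α D⁻¹) a ha]
  have hαD : α * D = D * β := by simp [β, mul_assoc]
  refine ⟨φ ((β : Matrix ι ι R) i₀ i₀), ?_⟩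
  rw [← hD, mulVec_mulVec, ← coe_mul, ← map_mul, hαD, map_mul, coe_mul, ← mulVec_mulVec, hβ,
    mulVec_smul]

theorem exists_ne_apply_ne_zero_of_mul_eq_one [NoZeroDivisors K] {M N : Matrix ι ι K}
    (hMN : M * N = 1) {i₀ a : ι} (ha : a ≠ i₀) (hMa : M a i₀ ≠ 0) : ∃ q ≠ i₀, N q i₀ ≠ 0 := by
  by_contra! H
  have hcol : ∀ r, (M * N) r i₀ = M r i₀ * N i₀ i₀ := fun r =>
    Finset.sum_eq_single i₀ (fun q _ hq => by simp [H q hq]) (by simp)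
  have h₀ : M i₀ i₀ * N i₀ i₀ = 1 := by rw [← hcol, hMN, one_apply_eq]
  have hₐ : M a i₀ * N i₀ i₀ = 0 := by rw [← hcol, hMN, one_apply_ne ha]
  have hN : N i₀ i₀ = 0 := (mul_eq_zero.mp hₐ).resolve_left hMa
  apply hMa
  rw [← mul_one (M a i₀), ← h₀, hN, mul_zero, mul_zero]

end Reduction

theorem exists_mem_gcl_pow_eight_coe_eq_one_add_vecMulVec_single {ι R : Type*} [Fintype ι]
    [DecidableEq ι] [CommRing R] {α β : SpecialLinearGroup ι R} (hβ : β ∈ gcl α)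
    {i₀ a b q : ι} (ha : a ≠ i₀) (hb : b ≠ i₀) (hab : a ≠ b) (hq : q ≠ i₀) :
    ∃ g ∈ gcl α ^ 8, ∃ y : ι → R, y i₀ = 0 ∧
      y b = -((β : Matrix ι ι R) a i₀ ^ 2 * (β⁻¹ : SpecialLinearGroup ι R) q i₀) ∧
      (g : Matrix ι ι R) = 1 + vecMulVec (Pi.single i₀ 1) y := by
  set e : ι → ι → R := fun i => Pi.single i 1 with he
  have he₀ : ∀ {j}, j ≠ i₀ → e j ⬝ᵥ e i₀ = 0 := fun hj => by simp [he, hj]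
  set u := (β : Matrix ι ι R) *ᵥ e i₀
  set w := e q ᵥ* ((β⁻¹ : SpecialLinearGroup ι R) : Matrix ι ι R)
  set y := (β : Matrix ι ι R) b i₀ • e a - (β : Matrix ι ι R) a i₀ • e b
  have hyi₀ : y i₀ = 0 := by simp [y, he, ha.symm, hb.symm]
  have hy₀ : y ⬝ᵥ e i₀ = 0 := by simp [he, hyi₀]
  have hyu : y ⬝ᵥ u = 0 := by
    simp only [y, u, sub_dotProduct, smul_dotProduct, he, single_dotProduct, mulVec_single_one]
    simp [mul_comm]
  set E := oneAddVecMulVec (e i₀) (e q) (he₀ hq)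
  set F := oneAddVecMulVec (e i₀) y hy₀
  set G := oneAddVecMulVec (e i₀) (e a) (he₀ ha)
  -- `⁅β, E⁆ = (β E β⁻¹) E⁻¹`, and `E⁻¹` commutes with `F`.
  have hβEF : ⁅⁅β, E⁆, F⁆ = oneAddVecMulVec ((w ⬝ᵥ e i₀) • u) y
      (by rw [dotProduct_smul, hyu, smul_zero]) := by
    rw [commutatorElement_def β, conj_oneAddVecMulVec, commutatorElement_mul_left_of_commute _
        (commute_oneAddVecMulVec_left _ _ _ _ _).inv_left,
      commutatorElement_oneAddVecMulVec _ _ _ _ _ _ hyu]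
  have hG : ⁅G, ⁅⁅β, E⁆, F⁆⁆ = oneAddVecMulVec ((e a ⬝ᵥ (w ⬝ᵥ e i₀) • u) • e i₀) y
      (by rw [dotProduct_smul, hy₀, smul_zero]) := by
    rw [hβEF, commutatorElement_oneAddVecMulVec _ _ _ _ _ _ hy₀]
  have hmem : ⁅⁅β, E⁆, F⁆ ∈ gcl α ^ 4 :=
    commutatorElement_mem_gcl_pow (commutatorElement_mem_gcl_pow (k := 1) (by rwa [pow_one]) E) F
  refine ⟨⁅G, ⁅⁅β, E⁆, F⁆⁆, ?_, (e a ⬝ᵥ (w ⬝ᵥ e i₀) • u) • y, ?_, ?_, ?_⟩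
  · rw [← commutatorElement_inv]
    exact inv_mem_gcl_pow (commutatorElement_mem_gcl_pow hmem G)
  · simp [hyi₀]
  · have hyb : y b = -(β : Matrix ι ι R) a i₀ := by simp [y, he, hab.symm]
    simp only [Pi.smul_apply, smul_eq_mul, dotProduct_smul, hyb, he, single_dotProduct,
      dotProduct_single, one_mul, mul_one, u, w, mulVec_single_one, single_one_vecMul, col_apply,
      row_apply]
    ring
  · rw [hG, coe_oneAddVecMulVec, smul_vecMulVec, vecMulVec_smul]

/-- Lemma A.3: if `α ∉ SL*_n(A;𝔮)` for a maximal ideal `𝔮`, then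
`gcl(α)^32 ∩ U(A)` is not contained in `U(A;𝔮)`. -/
theorem gcl_pow_inter_U_not_subset (n : ℕ) (hn : 3 ≤ n)
    (A : Type*) [CommRing A]
    (𝔮 : Ideal A) (hq : 𝔮.IsMaximal)
    (α : Matrix.SpecialLinearGroup (Fin n) A)
    (hα : Matrix.SpecialLinearGroup.map (Ideal.Quotient.mk 𝔮) α ∉
      Subgroup.center (Matrix.SpecialLinearGroup (Fin n) (A ⧸ 𝔮))) :
    ∃ u ∈ gcl α ^ (32 : ℕ), u ∈ Uset n (by omega) A ∧
      Matrix.SpecialLinearGroup.map (Ideal.Quotient.mk 𝔮) u ≠ 1 := by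
  have hcard : 2 < Fintype.card (Fin n) := by rw [Fintype.card_fin]; omega
  set i₀ : Fin n := ⟨0, by omega⟩
  set φ := Ideal.Quotient.mk 𝔮
  have := hq.isPrime
  obtain ⟨β, hβ, a, ha, hβa⟩ :=
    exists_mem_gcl_map_apply_ne_zero hcard i₀ Ideal.Quotient.mk_surjective hα
  obtain ⟨q, hq₀, hβq⟩ := exists_ne_apply_ne_zero_of_mul_eq_one
    (M := (map φ β : Matrix (Fin n) (Fin n) (A ⧸ 𝔮))) (N := (map φ β⁻¹ : Matrix _ _ _))
    (by rw [← coe_mul, ← map_mul, mul_inv_cancel, map_one, coe_one]) ha (by simpa using hβa)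
  obtain ⟨b, hba, hb₀⟩ := exists_ne_ne_of_two_lt_card hcard a i₀
  obtain ⟨g, hg, y, hy₀, hyb, hgy⟩ :=
    exists_mem_gcl_pow_eight_coe_eq_one_add_vecMulVec_single hβ ha hb₀ hba.symm hq₀
  refine ⟨g, Set.pow_subset_pow_right (one_mem_gcl α) (by norm_num) hg,
    mem_Uset_of_coe_eq_one_add_vecMulVec_single _ hy₀ hgy, fun hg₁ => ?_⟩
  have hentry := congrArg (fun γ : SpecialLinearGroup (Fin n) (A ⧸ 𝔮) =>
    (γ : Matrix (Fin n) (Fin n) (A ⧸ 𝔮)) i₀ b) hg₁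
  simp only [map_apply_coe, RingHom.mapMatrix_apply, Matrix.map_apply, coe_one,
    one_apply_ne hb₀.symm, hgy, Matrix.add_apply, vecMulVec_apply, Pi.single_eq_same, zero_add,
    one_mul, hyb, map_neg, map_mul, map_pow, neg_eq_zero] at hentry hβq
  exact mul_ne_zero (pow_ne_zero 2 hβa) hβq hentry
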